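/- arXiv:0707.3672 — 2 statements merged into one kernel-verified Lean document; each statement's English description precedes it below -/
import Mathlib

section
/- Conversely, if a k×k real matrix A satisfies d(Au, Av) = 0 for all u, v ∈ ℝ^k (projective diameter zero), then A is a (max,+) outer product: there exist c, r ∈ ℝ^k with A_{ij} = c_i + r_j for all i, j. -/
open Finset Filter

noncomputable def mv {k : ℕ} (A : Fin (k+1) → Fin (k+1) → ℝ) (u : Fin (k+1) → ℝ) :
    Fin (k+1) → ℝ :=
  fun i => Finset.univ.sup' Finset.univ_nonempty (fun j => A i j + u j)

noncomputable def pd {k : ℕ} (u v : Fin (k+1) → ℝ) : ℝ :=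
  Finset.univ.sup' Finset.univ_nonempty (fun i => u i - v i) +
  Finset.univ.sup' Finset.univ_nonempty (fun i => v i - u i)

/-- A maximal difference `u - v` and a maximal difference `v - u` can only cancel if `u - v` is
constant. -/
lemma sub_eq_sub_of_pd_eq_zero {k : ℕ} {u v : Fin (k+1) → ℝ} (h : pd u v = 0) (i i' : Fin (k+1)) :
    u i - v i = u i' - v i' := by
  have hmax : ∀ l, u l - v l = univ.sup' univ_nonempty (fun l => u l - v l) := fun l =>
    le_antisymm (le_sup' (fun l => u l - v l) (mem_univ l)) <| by
      have := le_sup' (fun l => v l - u l) (mem_univ l)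
      unfold pd at h
      linarith
  rw [hmax i, hmax i']

/-- The vector equal to `0` at `j` and to `-T` elsewhere, with `T` the largest entry of `A` relative
to column `j`, is a tropical unit vector for `A`: it picks out column `j`. -/
lemma exists_mv_eq_column {k : ℕ} (A : Fin (k+1) → Fin (k+1) → ℝ) (j : Fin (k+1)) :
    ∃ u, mv A u = fun i => A i j := by
  set T := univ.sup' univ_nonempty (fun p : Fin (k+1) × Fin (k+1) => A p.1 p.2 - A p.1 j)
  refine ⟨fun l => if l = j then 0 else -T, funext fun i => le_antisymm ?_ ?_⟩
  · refine sup'_le _ _ fun l _ => ?_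
    dsimp only
    split_ifs with hl
    · simp [hl]
    · have := le_sup' (fun p : Fin (k+1) × Fin (k+1) => A p.1 p.2 - A p.1 j) (mem_univ (i, l))
      dsimp only at this
      linarith
  · exact le_sup'_of_le _ (mem_univ j) (by simp)

/-- A matrix of projective diameter zero is a (max,+) outer product. -/
theorem pd_zero_rank_one {k : ℕ} (A : Fin (k+1) → Fin (k+1) → ℝ)
    (h : ∀ u v : Fin (k+1) → ℝ, pd (mv A u) (mv A v) = 0) :
    ∃ c r : Fin (k+1) → ℝ, ∀ i j, A i j = c i + r j := by
  refine ⟨fun i => A i 0, fun j => A 0 j - A 0 0, fun i j => ?_⟩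
  obtain ⟨u, hu⟩ := exists_mv_eq_column A j
  obtain ⟨v, hv⟩ := exists_mv_eq_column A 0
  have hcols := sub_eq_sub_of_pd_eq_zero (h u v) i 0
  rw [hu, hv] at hcols
  linarith
end

section
/- For any two vectors x ≠ y in ℝ^k that are not projectively equal, setting D = d(x,y) > 0, there is an interval of λ values of length exactly D such that the (max,+) combinations (λ + x) ⊕ y for λ in the open interval are pairwise projectively distinct, with the endpoints of the interval giving back y and x respectively (projectively). -/
open Finset Filter

/-- The interval of (max,+) convex combinations of two non-proportional
vectors has length d(x,y), its endpoints giving back x and y projectively,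
and distinct parameters giving projectively distinct combinations. -/
theorem interval_of_combinations {k : ℕ} (x y : Fin (k+1) → ℝ)
    (hxy : ¬ ∃ a : ℝ, ∀ i, x i = a + y i) :
    0 < pd x y ∧
    (Finset.univ.sup' Finset.univ_nonempty (fun i => y i - x i)) -
      (-(Finset.univ.sup' Finset.univ_nonempty (fun i => x i - y i))) = pd x y ∧
    (∃ a : ℝ, ∀ i,
      max ((Finset.univ.sup' Finset.univ_nonempty (fun i => y i - x i)) + x i) (y i)
        = a + x i) ∧
    (∃ a : ℝ, ∀ i,
      max ((-(Finset.univ.sup' Finset.univ_nonempty (fun i => x i - y i))) + x i) (y i)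
        = a + y i) ∧
    (∀ lam lam' : ℝ,
      lam ∈ Set.Icc (-(Finset.univ.sup' Finset.univ_nonempty (fun i => x i - y i)))
        (Finset.univ.sup' Finset.univ_nonempty (fun i => y i - x i)) →
      lam' ∈ Set.Icc (-(Finset.univ.sup' Finset.univ_nonempty (fun i => x i - y i)))
        (Finset.univ.sup' Finset.univ_nonempty (fun i => y i - x i)) →
      lam ≠ lam' →
      ¬ ∃ a : ℝ, ∀ i, max (lam + x i) (y i) = a + max (lam' + x i) (y i)) := by
  have hMle : ∀ i, y i - x i ≤ Finset.univ.sup' Finset.univ_nonempty (fun i => y i - x i) :=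
    fun i => Finset.le_sup' (fun i => y i - x i) (Finset.mem_univ i)
  have hmle : ∀ i, x i - y i ≤ Finset.univ.sup' Finset.univ_nonempty (fun i => x i - y i) :=
    fun i => Finset.le_sup' (fun i => x i - y i) (Finset.mem_univ i)
  obtain ⟨i0, -, hi0⟩ := Finset.exists_mem_eq_sup' (Finset.univ_nonempty (α := Fin (k+1)))
    (fun i => x i - y i)
  obtain ⟨i1, -, hi1⟩ := Finset.exists_mem_eq_sup' (Finset.univ_nonempty (α := Fin (k+1)))
    (fun i => y i - x i)
  have hpd : pd x y = Finset.univ.sup' Finset.univ_nonempty (fun i => x i - y i)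
      + Finset.univ.sup' Finset.univ_nonempty (fun i => y i - x i) := rfl
  refine ⟨?_, by rw [hpd]; ring, ⟨_, fun i => max_eq_left (by linarith [hMle i])⟩,
    ⟨0, fun i => by rw [zero_add]; exact max_eq_right (by linarith [hmle i])⟩, ?_⟩
  · by_contra h
    push_neg at h
    rw [hpd] at h
    apply hxy
    refine ⟨Finset.univ.sup' Finset.univ_nonempty (fun i => x i - y i), fun i => ?_⟩
    have h1 := hmle i
    have h2 := hMle i
    linarith
  · rintro lam lam' ⟨hl1, hl2⟩ ⟨hl1', hl2'⟩ hne ⟨a, ha⟩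
    have e0 := ha i0
    have e1 := ha i1
    rw [max_eq_left (by linarith [hi0.ge]), max_eq_left (by linarith [hi0.ge])] at e0
    rw [max_eq_right (by linarith [hi1.ge]), max_eq_right (by linarith [hi1.ge])] at e1
    exact hne (by linarith)
end
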